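/- Let A be a commutative ring and let R be a flat filtered A-algebra, i.e., R = ∪_{i∈ℕ} R_i where the R_i are ideals of R with R_i R_j ⊆ R_{i+j}, R_{i+1} ⊆ R_i, A = R_0/R_1, and each R_i is a flat A-module. Assume moreover that each quotient R_i/R_{i+1} is a flat A-module. Then for every filtered R-module M = ∪_{i∈ℕ} M_i (with R_i M_j ⊆ M_{i+j}), equipping R ⊗_A M with the product filtration (R⊗_A M)_n = Σ_{i+j=n} R_i ⊗_A M_j, there is an isomorphism of graded gr(R)-modules gr(R ⊗_A M) ≅ gr(R) ⊗_A gr(M). -/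

import Mathlib

/-!
Statement 3: Let `A` be a commutative ring and `R` a flat filtered `A`-algebra
(`R = ∪ R_i`, the `R_i` ideals with `R_i R_j ⊆ R_{i+j}`, `R_{i+1} ⊆ R_i`, `A = R_0/R_1`,
each `R_i` flat over `A`), such that each quotient `R_i/R_{i+1}` is a flat `A`-module.
Then for every filtered `R`-module `M = ∪ M_i`, equipping `R ⊗[A] M` with the product
filtration `(R ⊗_A M)_n = Σ_{i+j=n} R_i ⊗ M_j`, there is an isomorphism of graded
`gr(R)`-modules `gr(R ⊗[A] M) ≅ gr(R) ⊗[A] gr(M)`.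

The isomorphism is expressed as a family of `A`-linear isomorphisms in each degree `n`
(gradedness), which intertwines, for every `i` and `r ∈ R_i`, the maps induced by
multiplication by `r` on the two sides (`gr(R)`-linearity: the homogeneous components of
`gr(R)` are exactly the classes of elements `r ∈ R_i`).
-/

open TensorProduct DirectSum

section Filtered

variable (A R : Type) [CommRing A] [CommRing R] [Algebra A R]

/-- The `i`-th graded piece `H i / H (i+1)` of a filtration `H` on an `R`-module `N`,
as an `A`-module. -/
noncomputable abbrev filtPiece {N : Type} [AddCommGroup N] [Module R N] [Module A N]
    [IsScalarTower A R N] (H : ℕ → Submodule R N) (i : ℕ) : Type :=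
  (↥((H i).restrictScalars A)) ⧸
    (Submodule.comap ((H i).restrictScalars A).subtype ((H (i + 1)).restrictScalars A))

/-- The product filtration `(R ⊗[A] M)_n = Σ_{i+j=n} R_i ⊗ M_j` on `R ⊗[A] M`. -/
noncomputable def prodFilt (F : ℕ → Ideal R) (M : Type) [AddCommGroup M] [Module R M]
    [Module A M] [IsScalarTower A R M] (G : ℕ → Submodule R M) (n : ℕ) :
    Submodule R (R ⊗[A] M) :=
  ⨆ ij : {ij : ℕ × ℕ // ij.1 + ij.2 = n},
    Submodule.span R {x | ∃ r ∈ F ij.1.1, ∃ m ∈ G ij.1.2, x = r ⊗ₜ[A] m}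

/-- Multiplication by an element `r ∈ F i`, as an `A`-linear map
`F a / F (a+1) → F (i+a) / F (i+a+1)` on the graded pieces of the filtered ring `R`. -/
noncomputable def grSmulPiece (F : ℕ → Ideal R) (hFmul : ∀ i j, F i * F j ≤ F (i + j))
    (i : ℕ) (r : R) (hr : r ∈ F i) (a : ℕ) :
    filtPiece A R (fun t => (F t : Submodule R R)) a →ₗ[A]
      filtPiece A R (fun t => (F t : Submodule R R)) (i + a) :=
  Submodule.mapQ _ _
    (((LinearMap.lsmul R R r).restrictScalars A).restrict
      (p := (F a : Submodule R R).restrictScalars A)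
      (q := (F (i + a) : Submodule R R).restrictScalars A)
      (fun _x hx => hFmul i a (Ideal.mul_mem_mul hr hx)))
    (fun _x hx => hFmul i (a + 1) (Ideal.mul_mem_mul hr hx))

end Filtered

section Action

variable (A R : Type) [CommRing A] [CommRing R] [Algebra A R]
variable (F : ℕ → Ideal R) (hFmul : ∀ i j, F i * F j ≤ F (i + j))
variable (M : Type) [AddCommGroup M] [Module R M] [Module A M] [IsScalarTower A R M]
variable (G : ℕ → Submodule R M)

/-- The degree-`n` part of `gr(R) ⊗[A] gr(M)`: the direct sum over `i + j = n` of
`(F i / F (i+1)) ⊗[A] (G j / G (j+1))`. -/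
noncomputable abbrev grTensorDeg (n : ℕ) : Type :=
  ⨁ ij : {ij : ℕ × ℕ // ij.1 + ij.2 = n},
    (filtPiece A R (fun t => (F t : Submodule R R)) ij.1.1) ⊗[A] (filtPiece A R G ij.1.2)

/-- Multiplication by `r ∈ F i` on `gr(R) ⊗[A] gr(M)`, acting on the left tensor factor
and shifting degrees by `i`. -/
noncomputable def grSmulTensor (i : ℕ) (r : R) (hr : r ∈ F i) (n : ℕ) :
    grTensorDeg A R F M G n →ₗ[A] grTensorDeg A R F M G (i + n) :=
  DirectSum.toModule A _ _ (fun ij =>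
    (DirectSum.lof A {ij : ℕ × ℕ // ij.1 + ij.2 = i + n}
        (fun q => (filtPiece A R (fun t => (F t : Submodule R R)) q.1.1) ⊗[A]
          (filtPiece A R G q.1.2))
        ⟨(i + ij.1.1, ij.1.2), by rw [add_assoc, ij.2]⟩).comp
      (LinearMap.rTensor (filtPiece A R G ij.1.2)
        (grSmulPiece A R F hFmul i r hr ij.1.1)))

end Action

section Homological
variable {A : Type} [CommRing A]
variable {X Y Z : Type} [AddCommGroup X] [AddCommGroup Y] [AddCommGroup Z]
  [Module A X] [Module A Y] [Module A Z]
variable {f : X →ₗ[A] Y} {g : Y →ₗ[A] Z}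

/-- If the cokernel of an injection is flat, tensoring preserves the injection. -/
theorem rTensor_injective_of_flat_coker [Module.Flat A Z]
    (hf : Function.Injective f) (hfg : Function.Exact f g) (hg : Function.Surjective g)
    (N : Type) [AddCommGroup N] [Module A N] :
    Function.Injective (f.rTensor N) := by
  classical
  -- free presentation of N
  obtain ⟨p, hp⟩ : ∃ p : (N →₀ A) →ₗ[A] N, Function.Surjective p :=
    ⟨Finsupp.linearCombination A id, Finsupp.linearCombination_id_surjective A N⟩
  obtain ⟨K, _, _, k, hkp, hkinj, hpk⟩ :
      ∃ K : Type, ∃ _ : AddCommGroup K, ∃ _ : Module A K, ∃ k : K →ₗ[A] (N →₀ A),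
        Function.Exact k p ∧ Function.Injective k ∧ p ∘ₗ k = 0 :=
    ⟨↥(LinearMap.ker p), inferInstance, inferInstance, (LinearMap.ker p).subtype,
      LinearMap.exact_subtype_ker_map p, Submodule.injective_subtype _, by ext x; exact x.2⟩
  rw [injective_iff_map_eq_zero]
  intro u h0
  obtain ⟨u', hu'⟩ := LinearMap.lTensor_surjective X hp u
  set v : Y ⊗[A] (N →₀ A) := f.rTensor (N →₀ A) u' with hv_def
  have hv : p.lTensor Y v = 0 := by
    have : p.lTensor Y ∘ₗ f.rTensor (N →₀ A) = f.rTensor N ∘ₗ p.lTensor X := by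
      rw [LinearMap.lTensor_comp_rTensor, LinearMap.rTensor_comp_lTensor]
    calc p.lTensor Y (f.rTensor (N →₀ A) u') = (p.lTensor Y ∘ₗ f.rTensor (N →₀ A)) u' := rfl
      _ = (f.rTensor N ∘ₗ p.lTensor X) u' := by rw [this]
      _ = f.rTensor N u := by rw [LinearMap.comp_apply, hu']
      _ = 0 := h0
  obtain ⟨w, hw⟩ := (lTensor_exact (f := k) (g := p) Y hkp hp v).mp hv
  have hgw : g.rTensor K w = 0 := by
    have hinj : Function.Injective (k.lTensor Z) :=
      Module.Flat.lTensor_preserves_injective_linearMap k hkinj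
    have h1 : k.lTensor Z ∘ₗ g.rTensor K = g.rTensor (N →₀ A) ∘ₗ k.lTensor Y := by
      rw [LinearMap.lTensor_comp_rTensor, LinearMap.rTensor_comp_lTensor]
    have h2 : (g.rTensor (N →₀ A) ∘ₗ k.lTensor Y) w = g.rTensor (N →₀ A) v := by
      rw [LinearMap.comp_apply, hw]
    have h3 : g.rTensor (N →₀ A) v = 0 := by
      rw [hv_def, ← LinearMap.comp_apply, ← LinearMap.rTensor_comp,
        hfg.linearMap_comp_eq_zero, LinearMap.rTensor_zero, LinearMap.zero_apply]
    have hz : k.lTensor Z (g.rTensor K w) = 0 := by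
      calc k.lTensor Z (g.rTensor K w) = (k.lTensor Z ∘ₗ g.rTensor K) w := rfl
        _ = 0 := by rw [h1, h2, h3]
    exact hinj (by rw [hz, map_zero])
  obtain ⟨t, ht⟩ := (rTensor_exact (f := f) (g := g) K hfg hg w).mp hgw
  have hPinj : Function.Injective (f.rTensor (N →₀ A)) :=
    Module.Flat.rTensor_preserves_injective_linearMap f hf
  have hu't : u' = k.lTensor X t := by
    apply hPinj
    have h1 : f.rTensor (N →₀ A) ∘ₗ k.lTensor X = k.lTensor Y ∘ₗ f.rTensor K := by
      rw [LinearMap.rTensor_comp_lTensor, LinearMap.lTensor_comp_rTensor]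
    calc f.rTensor (N →₀ A) u' = v := rfl
      _ = k.lTensor Y w := hw.symm
      _ = k.lTensor Y (f.rTensor K t) := by rw [ht]
      _ = (k.lTensor Y ∘ₗ f.rTensor K) t := rfl
      _ = (f.rTensor (N →₀ A) ∘ₗ k.lTensor X) t := by rw [h1]
      _ = f.rTensor (N →₀ A) (k.lTensor X t) := rfl
  calc u = p.lTensor X u' := hu'.symm
    _ = p.lTensor X (k.lTensor X t) := by rw [hu't]
    _ = (p ∘ₗ k).lTensor X t := by rw [LinearMap.lTensor_comp]; rfl
    _ = 0 := by rw [hpk, LinearMap.lTensor_zero, LinearMap.zero_apply]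

/-- Extension of flat modules is flat. -/
theorem flat_of_extension [Module.Flat A X] [Module.Flat A Z]
    (hf : Function.Injective f) (hfg : Function.Exact f g) (hg : Function.Surjective g) :
    Module.Flat A Y := by
  rw [Module.Flat.iff_lTensor_preserves_injective_linearMap]
  intro N N' _ _ _ _ φ hφ
  rw [injective_iff_map_eq_zero]
  intro u h0
  have hZ : φ.lTensor Z (g.rTensor N u) = 0 := by
    have h1 : φ.lTensor Z ∘ₗ g.rTensor N = g.rTensor N' ∘ₗ φ.lTensor Y := by
      rw [LinearMap.lTensor_comp_rTensor, LinearMap.rTensor_comp_lTensor]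
    calc φ.lTensor Z (g.rTensor N u) = (φ.lTensor Z ∘ₗ g.rTensor N) u := rfl
      _ = g.rTensor N' (φ.lTensor Y u) := by rw [h1]; rfl
      _ = 0 := by rw [h0]; simp
  have hZinj : Function.Injective (φ.lTensor Z) :=
    Module.Flat.lTensor_preserves_injective_linearMap φ hφ
  have : g.rTensor N u = 0 := hZinj (by rw [hZ]; simp)
  obtain ⟨w, hw⟩ := (rTensor_exact (f := f) (g := g) N hfg hg u).mp this
  have hXw : φ.lTensor X w = 0 := by
    have hinj : Function.Injective (f.rTensor N') :=
      rTensor_injective_of_flat_coker hf hfg hg N'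
    apply hinj
    have h1 : f.rTensor N' ∘ₗ φ.lTensor X = φ.lTensor Y ∘ₗ f.rTensor N := by
      rw [LinearMap.rTensor_comp_lTensor, LinearMap.lTensor_comp_rTensor]
    calc f.rTensor N' (φ.lTensor X w) = (φ.lTensor Y ∘ₗ f.rTensor N) w := by rw [← h1]; rfl
      _ = φ.lTensor Y u := by rw [LinearMap.comp_apply, hw]
      _ = 0 := h0
    |>.trans (by simp)
  have hXinj : Function.Injective (φ.lTensor X) :=
    Module.Flat.lTensor_preserves_injective_linearMap φ hφ
  have : w = 0 := hXinj (by rw [hXw]; simp)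
  rw [← hw, this, map_zero]

end Homological




lemma filt_le {X : Type} [Preorder X] (H : ℕ → X) (hdec : ∀ i, H (i + 1) ≤ H i)
    {s t : ℕ} (h : s ≤ t) : H t ≤ H s :=
  (antitone_nat_of_succ_le hdec) h

section Main
variable (A R : Type) [CommRing A] [CommRing R] [Algebra A R]
variable (F : ℕ → Ideal R)
variable (M : Type) [AddCommGroup M] [Module R M] [Module A M] [IsScalarTower A R M]
variable (G : ℕ → Submodule R M)

lemma span_R_le_span_A {T : Type} [AddCommGroup T] [Module A T] [Module R T]
    [IsScalarTower A R T] {S : Set T} (hS : ∀ (c : R), ∀ s ∈ S, c • s ∈ S) {x : T}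
    (hx : x ∈ Submodule.span R S) : x ∈ Submodule.span A S := by
  have key : ∀ (c : R), ∀ y ∈ Submodule.span A S, c • y ∈ Submodule.span A S := by
    intro c y hy
    induction hy using Submodule.span_induction with
    | mem z hz => exact Submodule.subset_span (hS c z hz)
    | zero => rw [smul_zero]; exact Submodule.zero_mem _
    | add u v _ _ hu hv => rw [smul_add]; exact Submodule.add_mem _ hu hv
    | smul a u _ hu =>
        have : c • a • u = a • c • u := by
          rw [← algebraMap_smul R a u, ← algebraMap_smul R a (c • u),
            smul_smul, smul_smul, mul_comm]
        rw [this]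
        exact Submodule.smul_mem _ a hu
  induction hx using Submodule.span_induction with
  | mem z hz => exact Submodule.subset_span hz
  | zero => exact Submodule.zero_mem _
  | add u v _ _ hu hv => exact Submodule.add_mem _ hu hv
  | smul c u _ hu => exact key c u hu

lemma tmul_mem_prodFilt {a b n : ℕ} (h : a + b = n) {x : R} (hx : x ∈ F a)
    {y : M} (hy : y ∈ G b) : x ⊗ₜ[A] y ∈ prodFilt A R F M G n :=
  (le_iSup (fun ij : {ij : ℕ × ℕ // ij.1 + ij.2 = n} =>
      Submodule.span R {z | ∃ r ∈ F ij.1.1, ∃ m ∈ G ij.1.2, z = r ⊗ₜ[A] m}) ⟨(a, b), h⟩)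
    (Submodule.subset_span ⟨x, hx, y, hy, rfl⟩)

lemma prodFilt_induction (n : ℕ) {C : (R ⊗[A] M) → Prop} (h0 : C 0)
    (hadd : ∀ x y, C x → C y → C (x + y)) (hsmul : ∀ (a : A) x, C x → C (a • x))
    (hgen : ∀ a b, a + b = n → ∀ x ∈ F a, ∀ y ∈ G b, C (x ⊗ₜ[A] y)) :
    ∀ z ∈ prodFilt A R F M G n, C z := by
  intro z hz
  refine Submodule.iSup_induction (motive := C) _ hz (fun ij x hx => ?_) h0 hadd
  have hx' : x ∈ Submodule.span A {z | ∃ r ∈ F ij.1.1, ∃ m ∈ G ij.1.2, z = r ⊗ₜ[A] m} := by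
    refine span_R_le_span_A A R (fun c s hs => ?_) hx
    obtain ⟨r, hr, m, hm, rfl⟩ := hs
    exact ⟨c * r, Ideal.mul_mem_left _ c hr, m, hm, (smul_tmul' c r m).symm⟩
  clear hx
  induction hx' using Submodule.span_induction with
  | mem s hs =>
      obtain ⟨r, hr, m, hm, rfl⟩ := hs
      exact hgen ij.1.1 ij.1.2 ij.2 r hr m hm
  | zero => exact h0
  | add u v _ _ hu hv => exact hadd u v hu hv
  | smul a u _ hu => exact hsmul a u hu

/-- bilinear map into the submodule -/
noncomputable def bil0 (a b n : ℕ) (h : a + b = n) :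
    ↥((F a).restrictScalars A) →ₗ[A] ↥((G b).restrictScalars A) →ₗ[A]
      ↥((prodFilt A R F M G n).restrictScalars A) :=
  LinearMap.mk₂ A
    (fun x y => ⟨x.1 ⊗ₜ[A] y.1, tmul_mem_prodFilt A R F M G h x.2 y.2⟩)
    (fun x x' y => Subtype.ext (by simp [add_tmul]))
    (fun c x y => Subtype.ext (by simp [smul_tmul']))
    (fun x y y' => Subtype.ext (by simp [tmul_add]))
    (fun c x y => Subtype.ext (by simp [tmul_smul]))

/-- the quotient map onto the graded piece -/
noncomputable def filtMkQ {N : Type} [AddCommGroup N] [Module R N] [Module A N]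
    [IsScalarTower A R N] (H : ℕ → Submodule R N) (i : ℕ) :
    ↥((H i).restrictScalars A) →ₗ[A] filtPiece A R H i :=
  Submodule.mkQ _

noncomputable def philift (a b n : ℕ) (h : a + b = n) :
    (↥((F a).restrictScalars A) ⊗[A] ↥((G b).restrictScalars A)) →ₗ[A]
      filtPiece A R (prodFilt A R F M G) n :=
  TensorProduct.lift ((bil0 A R F M G a b n h).compr₂
    (filtMkQ A R (prodFilt A R F M G) n))

lemma philift_tmul (a b n : ℕ) (h : a + b = n) (x : ↥((F a).restrictScalars A))
    (y : ↥((G b).restrictScalars A)) :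
    philift A R F M G a b n h (x ⊗ₜ[A] y) =
      Submodule.Quotient.mk ⟨x.1 ⊗ₜ[A] y.1, tmul_mem_prodFilt A R F M G h x.2 y.2⟩ := rfl

/-- The component map `gr_a(R) ⊗ gr_b(M) → gr_n(R ⊗ M)`. -/
noncomputable def phiComp (a b n : ℕ) (h : a + b = n) :
    (filtPiece A R (fun t => (F t : Submodule R R)) a ⊗[A] filtPiece A R G b) →ₗ[A]
      filtPiece A R (prodFilt A R F M G) n :=
  (Submodule.liftQ _ (philift A R F M G a b n h) (by
    rw [sup_le_iff]
    constructor
    · rintro t ⟨u, rfl⟩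
      induction u using TensorProduct.induction_on with
      | zero => simp
      | add u v hu hv => rw [map_add]; exact add_mem hu hv
      | tmul x y =>
          rw [LinearMap.mem_ker, TensorProduct.map_tmul, LinearMap.id_coe, id_eq,
            philift_tmul, Submodule.Quotient.mk_eq_zero, Submodule.mem_comap]
          exact tmul_mem_prodFilt A R F M G (by omega) x.2 y.2
    · rintro t ⟨u, rfl⟩
      induction u using TensorProduct.induction_on with
      | zero => simp
      | add u v hu hv => rw [map_add]; exact add_mem hu hv
      | tmul x y =>
          rw [LinearMap.mem_ker, TensorProduct.map_tmul, LinearMap.id_coe, id_eq,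
            philift_tmul, Submodule.Quotient.mk_eq_zero, Submodule.mem_comap]
          exact tmul_mem_prodFilt A R F M G (by omega) x.2 y.2)) ∘ₗ
    (quotientTensorQuotientEquiv _ _).toLinearMap

lemma phiComp_tmul (a b n : ℕ) (h : a + b = n) (x : ↥((F a).restrictScalars A))
    (y : ↥((G b).restrictScalars A)) :
    phiComp A R F M G a b n h
      (Submodule.Quotient.mk x ⊗ₜ[A] Submodule.Quotient.mk y) =
      Submodule.Quotient.mk ⟨x.1 ⊗ₜ[A] y.1, tmul_mem_prodFilt A R F M G h x.2 y.2⟩ := rfl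


/-- The natural map `gr(R) ⊗ gr(M) → gr(R ⊗ M)` in degree `n`. -/
noncomputable def Phi (n : ℕ) :
    grTensorDeg A R F M G n →ₗ[A] filtPiece A R (prodFilt A R F M G) n :=
  DirectSum.toModule A _ _ (fun ij => phiComp A R F M G ij.1.1 ij.1.2 n ij.2)

set_option maxHeartbeats 1600000 in
lemma Phi_lof (n : ℕ) (ij : {ij : ℕ × ℕ // ij.1 + ij.2 = n})
    (u : filtPiece A R (fun t => (F t : Submodule R R)) ij.1.1 ⊗[A] filtPiece A R G ij.1.2) :
    Phi A R F M G n (DirectSum.lof A {ij : ℕ × ℕ // ij.1 + ij.2 = n}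
      (fun ij => (filtPiece A R (fun t => (F t : Submodule R R)) ij.1.1) ⊗[A]
        (filtPiece A R G ij.1.2)) ij u) = phiComp A R F M G ij.1.1 ij.1.2 n ij.2 u := by
  unfold Phi
  exact DirectSum.toModule_lof (R := A) (ι := {ij : ℕ × ℕ // ij.1 + ij.2 = n})
    (N := filtPiece A R (prodFilt A R F M G) n)
    (φ := fun ij => phiComp A R F M G ij.1.1 ij.1.2 n ij.2) ij u

section WithDec
variable (hFdec : ∀ i, F (i + 1) ≤ F i) (hGdec : ∀ i, G (i + 1) ≤ G i)


include hFdec hGdec in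
lemma prodFilt_le_ker (k j n : ℕ) (h : k + j = n) :
    ∀ z ∈ prodFilt A R F M G (n + 1),
      TensorProduct.map ((F (k + 1)).restrictScalars A).mkQ
        ((G (j + 1)).restrictScalars A).mkQ z = 0 := by
  refine prodFilt_induction A R F M G (n + 1) (map_zero _) (fun x y hx hy => ?_)
    (fun a x hx => ?_) (fun a b hab x hx y hy => ?_)
  · rw [map_add, hx, hy, add_zero]
  · rw [map_smul, hx, smul_zero]
  · rw [TensorProduct.map_tmul]
    rcases le_or_gt (k + 1) a with hka | hka
    · have : x ∈ (F (k + 1) : Submodule R R) := filt_le F hFdec hka hx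
      rw [show ((F (k+1)).restrictScalars A).mkQ x = 0 from
        (Submodule.Quotient.mk_eq_zero _).mpr this, TensorProduct.zero_tmul]
    · have : y ∈ (G (j + 1)) := filt_le G hGdec (by omega) hy
      rw [show ((G (j+1)).restrictScalars A).mkQ y = 0 from
        (Submodule.Quotient.mk_eq_zero _).mpr this, TensorProduct.tmul_zero]

/-- The map `gr_n(R ⊗ M) → (R/F_{k+1}) ⊗ (M/G_{j+1})` for `k + j = n`. -/
noncomputable def Theta (k j n : ℕ) (h : k + j = n) :
    filtPiece A R (prodFilt A R F M G) n →ₗ[A]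
      (R ⧸ (F (k + 1)).restrictScalars A) ⊗[A] (M ⧸ (G (j + 1)).restrictScalars A) :=
  Submodule.liftQ _
    ((TensorProduct.map ((F (k + 1)).restrictScalars A).mkQ
        ((G (j + 1)).restrictScalars A).mkQ) ∘ₗ
      ((prodFilt A R F M G n).restrictScalars A).subtype)
    (fun x hx => prodFilt_le_ker A R F M G hFdec hGdec k j n h x.1 hx)

lemma Theta_mk (k j n : ℕ) (h : k + j = n) (z : ↥((prodFilt A R F M G n).restrictScalars A)) :
    Theta A R F M G hFdec hGdec k j n h (Submodule.Quotient.mk z) =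
      TensorProduct.map ((F (k + 1)).restrictScalars A).mkQ
        ((G (j + 1)).restrictScalars A).mkQ z.1 := rfl

end WithDec

/-- `gr_k(R) → R/F_{k+1}`. -/
noncomputable def iotaR (k : ℕ) :
    filtPiece A R (fun t => (F t : Submodule R R)) k →ₗ[A] R ⧸ (F (k + 1)).restrictScalars A :=
  Submodule.liftQ _ (((F (k + 1)).restrictScalars A).mkQ ∘ₗ ((F k).restrictScalars A).subtype)
    (fun x hx => by
      simpa [Submodule.Quotient.mk_eq_zero] using hx)

lemma iotaR_mk (k : ℕ) (x : ↥((F k).restrictScalars A)) :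
    iotaR A R F k (Submodule.Quotient.mk x) = Submodule.Quotient.mk x.1 := rfl

lemma iotaR_injective (k : ℕ) : Function.Injective (iotaR A R F k) := by
  rw [injective_iff_map_eq_zero]
  intro u hu
  obtain ⟨x, rfl⟩ := Submodule.Quotient.mk_surjective _ u
  rw [iotaR_mk, Submodule.Quotient.mk_eq_zero] at hu
  rw [Submodule.Quotient.mk_eq_zero]
  exact hu

noncomputable def iotaM (j : ℕ) :
    filtPiece A R G j →ₗ[A] M ⧸ (G (j + 1)).restrictScalars A :=
  Submodule.liftQ _ (((G (j + 1)).restrictScalars A).mkQ ∘ₗ ((G j).restrictScalars A).subtype)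
    (fun x hx => by
      simpa [Submodule.Quotient.mk_eq_zero] using hx)

lemma iotaM_mk (j : ℕ) (y : ↥((G j).restrictScalars A)) :
    iotaM A R M G j (Submodule.Quotient.mk y) = Submodule.Quotient.mk y.1 := rfl

lemma iotaM_injective (j : ℕ) : Function.Injective (iotaM A R M G j) := by
  rw [injective_iff_map_eq_zero]
  intro u hu
  obtain ⟨x, rfl⟩ := Submodule.Quotient.mk_surjective _ u
  rw [iotaM_mk, Submodule.Quotient.mk_eq_zero] at hu
  rw [Submodule.Quotient.mk_eq_zero]
  exact hu

section FlatChain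
variable (hFdec : ∀ i, F (i + 1) ≤ F i)

/-- `R/F_{k+1} → R/F_k`. -/
noncomputable def betaR (k : ℕ) :
    (R ⧸ (F (k + 1)).restrictScalars A) →ₗ[A] R ⧸ (F k).restrictScalars A :=
  Submodule.mapQ _ _ LinearMap.id (fun x hx => hFdec k hx)

lemma betaR_mk (k : ℕ) (x : R) :
    betaR A R F hFdec k (Submodule.Quotient.mk x) = Submodule.Quotient.mk x := rfl

lemma betaR_surjective (k : ℕ) : Function.Surjective (betaR A R F hFdec k) := by
  intro q
  obtain ⟨x, rfl⟩ := Submodule.Quotient.mk_surjective _ q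
  exact ⟨Submodule.Quotient.mk x, rfl⟩

lemma exact_iotaR_betaR (k : ℕ) :
    Function.Exact (iotaR A R F k) (betaR A R F hFdec k) := by
  rw [LinearMap.exact_iff]
  ext q
  constructor
  · intro hq
    obtain ⟨x, rfl⟩ := Submodule.Quotient.mk_surjective _ q
    rw [LinearMap.mem_ker, betaR_mk, Submodule.Quotient.mk_eq_zero] at hq
    exact ⟨Submodule.Quotient.mk ⟨x, hq⟩, rfl⟩
  · rintro ⟨u, rfl⟩
    obtain ⟨x, rfl⟩ := Submodule.Quotient.mk_surjective _ u
    rw [LinearMap.mem_ker, iotaR_mk, betaR_mk, Submodule.Quotient.mk_eq_zero]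
    exact x.2

variable (hF0 : F 0 = ⊤)
variable (hflatq : ∀ i, Module.Flat A (filtPiece A R (fun t => (F t : Submodule R R)) i))

include hF0 hflatq hFdec in
lemma flat_RQ : ∀ k, Module.Flat A (R ⧸ (F k).restrictScalars A) := by
  intro k
  induction k with
  | zero =>
      have : Subsingleton (R ⧸ (F 0).restrictScalars A) := by
        rw [Submodule.Quotient.subsingleton_iff, hF0]
        rfl
      have : Module.Free A (R ⧸ (F 0).restrictScalars A) := Module.Free.of_subsingleton A _
      infer_instance
  | succ k ih =>
      have := hflatq k
      exact flat_of_extension (iotaR_injective A R F k) (exact_iotaR_betaR A R F hFdec k)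
        (betaR_surjective A R F hFdec k)

include hF0 hflatq hFdec in
lemma iota_tensor_injective (k j : ℕ) :
    Function.Injective (TensorProduct.map (iotaR A R F k) (iotaM A R M G j)) := by
  have hdecomp : TensorProduct.map (iotaR A R F k) (iotaM A R M G j) =
      ((iotaM A R M G j).lTensor (R ⧸ (F (k + 1)).restrictScalars A)).comp
        ((iotaR A R F k).rTensor (filtPiece A R G j)) :=
    (LinearMap.lTensor_comp_rTensor (f := iotaR A R F k) (g := iotaM A R M G j)).symm
  rw [hdecomp, LinearMap.coe_comp]
  have h1 : Function.Injective
      ((iotaR A R F k).rTensor (filtPiece A R G j)) := by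
    have := flat_RQ A R F hFdec hF0 hflatq k
    exact rTensor_injective_of_flat_coker (iotaR_injective A R F k)
      (exact_iotaR_betaR A R F hFdec k) (betaR_surjective A R F hFdec k) _
  have h2 : Function.Injective
      ((iotaM A R M G j).lTensor (R ⧸ (F (k + 1)).restrictScalars A)) := by
    have := flat_RQ A R F hFdec hF0 hflatq (k + 1)
    exact Module.Flat.lTensor_preserves_injective_linearMap _ (iotaM_injective A R M G j)
  exact h2.comp h1

end FlatChain

section Compat
variable (hFdec : ∀ i, F (i + 1) ≤ F i) (hGdec : ∀ i, G (i + 1) ≤ G i)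

set_option maxHeartbeats 1600000 in
lemma theta_phi (k j n : ℕ) (h : k + j = n) :
    (Theta A R F M G hFdec hGdec k j n h) ∘ₗ Phi A R F M G n =
      (TensorProduct.map (iotaR A R F k) (iotaM A R M G j)) ∘ₗ
        (DirectSum.component A {ij : ℕ × ℕ // ij.1 + ij.2 = n}
          (fun ij => (filtPiece A R (fun t => (F t : Submodule R R)) ij.1.1) ⊗[A]
            (filtPiece A R G ij.1.2)) ⟨(k, j), h⟩) := by
  refine DirectSum.linearMap_ext A (fun ij => ?_)
  refine TensorProduct.ext' (fun u v => ?_)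
  obtain ⟨x, rfl⟩ := Submodule.Quotient.mk_surjective _ u
  obtain ⟨y, rfl⟩ := Submodule.Quotient.mk_surjective _ v
  rw [LinearMap.comp_apply, LinearMap.comp_apply, LinearMap.comp_apply, LinearMap.comp_apply,
    Phi_lof, phiComp_tmul, Theta_mk, TensorProduct.map_tmul]
  by_cases hij : ij = ⟨(k, j), h⟩
  · subst hij
    rw [DirectSum.component.lof_self, TensorProduct.map_tmul, iotaR_mk, iotaM_mk]
    rfl
  · rw [DirectSum.component.of, dif_neg hij, map_zero]
    rcases lt_or_ge ij.1.1 k with hlt | hle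
    · have hy : y.1 ∈ G (j + 1) :=
        filt_le G hGdec (by have := ij.2; omega) y.2
      have : (((G (j + 1)).restrictScalars A).mkQ) y.1 = 0 :=
        (Submodule.Quotient.mk_eq_zero _).mpr hy
      rw [this, TensorProduct.tmul_zero]
    · have hk : k + 1 ≤ ij.1.1 := by
        rcases Nat.eq_or_lt_of_le hle with heq | hlt'
        · exfalso
          apply hij
          have hb : ij.1.2 = j := by have := ij.2; omega
          apply Subtype.ext
          apply Prod.ext <;> simp [heq.symm, hb]
        · omega
      have hx : x.1 ∈ F (k + 1) := filt_le F hFdec hk x.2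
      have : (((F (k + 1)).restrictScalars A).mkQ) x.1 = 0 :=
        (Submodule.Quotient.mk_eq_zero _).mpr hx
      rw [this, TensorProduct.zero_tmul]


variable (hF0 : F 0 = ⊤)
variable (hflatq : ∀ i, Module.Flat A (filtPiece A R (fun t => (F t : Submodule R R)) i))

noncomputable instance grTensorDeg_addCommGroup (n : ℕ) :
    AddCommGroup (grTensorDeg A R F M G n) :=
  @DirectSum.instAddCommGroup _ _ (fun _ => TensorProduct.addCommGroup)

include hFdec hGdec hF0 hflatq in
lemma Phi_injective (n : ℕ) : Function.Injective (Phi A R F M G n) := by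
  rw [injective_iff_map_eq_zero]
  intro xi hxi
  refine DirectSum.ext_component A (fun c => ?_)
  rw [map_zero]
  apply iota_tensor_injective A R F M G hFdec hF0 hflatq c.1.1 c.1.2
  have h1 := LinearMap.congr_fun (theta_phi A R F M G hFdec hGdec c.1.1 c.1.2 n c.2) xi
  rw [LinearMap.comp_apply, LinearMap.comp_apply, hxi, map_zero] at h1
  rw [← h1, map_zero]

lemma Phi_surjective (n : ℕ) : Function.Surjective (Phi A R F M G n) := by
  have key : ∀ z ∈ prodFilt A R F M G n,
      ∃ hz : z ∈ (prodFilt A R F M G n).restrictScalars A,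
        Submodule.Quotient.mk ⟨z, hz⟩ ∈ LinearMap.range (Phi A R F M G n) := by
    refine prodFilt_induction A R F M G n ?_ ?_ ?_ ?_
    · exact ⟨Submodule.zero_mem _, by
        rw [show (⟨0, Submodule.zero_mem _⟩ :
          ↥((prodFilt A R F M G n).restrictScalars A)) = 0 from rfl, Submodule.Quotient.mk_zero]
        exact Submodule.zero_mem _⟩
    · rintro x y ⟨hx, u, hu⟩ ⟨hy, v, hv⟩
      refine ⟨Submodule.add_mem _ hx hy, u + v, ?_⟩
      rw [map_add, hu, hv,
        show (⟨x + y, _⟩ : ↥((prodFilt A R F M G n).restrictScalars A)) =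
          ⟨x, hx⟩ + ⟨y, hy⟩ from rfl, Submodule.Quotient.mk_add]
    · rintro a x ⟨hx, u, hu⟩
      refine ⟨Submodule.smul_mem _ a hx, a • u, ?_⟩
      rw [map_smul, hu,
        show (⟨a • x, _⟩ : ↥((prodFilt A R F M G n).restrictScalars A)) =
          a • ⟨x, hx⟩ from rfl, Submodule.Quotient.mk_smul]
    · intro a b hab x hx y hy
      refine ⟨tmul_mem_prodFilt A R F M G hab hx hy,
        DirectSum.lof A {ij : ℕ × ℕ // ij.1 + ij.2 = n}
          (fun ij => (filtPiece A R (fun t => (F t : Submodule R R)) ij.1.1) ⊗[A]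
            (filtPiece A R G ij.1.2)) ⟨(a, b), hab⟩
          (Submodule.Quotient.mk ⟨x, hx⟩ ⊗ₜ[A] Submodule.Quotient.mk ⟨y, hy⟩), ?_⟩
      rw [Phi_lof, phiComp_tmul]
  intro q
  obtain ⟨z, rfl⟩ := Submodule.Quotient.mk_surjective _ q
  obtain ⟨hz', hr⟩ := key z.1 z.2
  obtain ⟨u, hu⟩ := hr
  exact ⟨u, by rw [hu]⟩

end Compat
end Main

section Act
variable (A R : Type) [CommRing A] [CommRing R] [Algebra A R]
variable (F : ℕ → Ideal R) (hFmul : ∀ i j, F i * F j ≤ F (i + j))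
variable (M : Type) [AddCommGroup M] [Module R M] [Module A M] [IsScalarTower A R M]
variable (G : ℕ → Submodule R M)

lemma grSmulPiece_mk (i : ℕ) (r : R) (hr : r ∈ F i) (a : ℕ)
    (x : ↥((F a).restrictScalars A)) :
    grSmulPiece A R F hFmul i r hr a (Submodule.Quotient.mk x) =
      Submodule.Quotient.mk ⟨r • x.1, hFmul i a (Ideal.mul_mem_mul hr x.2)⟩ := rfl

set_option maxHeartbeats 1600000 in
lemma grSmulTensor_lof (i : ℕ) (r : R) (hr : r ∈ F i) (n : ℕ)
    (ij : {ij : ℕ × ℕ // ij.1 + ij.2 = n})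
    (u : filtPiece A R (fun t => (F t : Submodule R R)) ij.1.1 ⊗[A] filtPiece A R G ij.1.2) :
    grSmulTensor A R F hFmul M G i r hr n
      (DirectSum.lof A {ij : ℕ × ℕ // ij.1 + ij.2 = n}
        (fun ij => (filtPiece A R (fun t => (F t : Submodule R R)) ij.1.1) ⊗[A]
          (filtPiece A R G ij.1.2)) ij u) =
      ((DirectSum.lof A {ij : ℕ × ℕ // ij.1 + ij.2 = i + n}
          (fun q => (filtPiece A R (fun t => (F t : Submodule R R)) q.1.1) ⊗[A]
            (filtPiece A R G q.1.2))
          ⟨(i + ij.1.1, ij.1.2), by rw [add_assoc, ij.2]⟩).comp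
        (LinearMap.rTensor (filtPiece A R G ij.1.2)
          (grSmulPiece A R F hFmul i r hr ij.1.1))) u := by
  unfold grSmulTensor
  exact DirectSum.toModule_lof (R := A) (ι := {ij : ℕ × ℕ // ij.1 + ij.2 = n})
    (N := grTensorDeg A R F M G (i + n))
    (φ := fun ij =>
      (DirectSum.lof A {ij : ℕ × ℕ // ij.1 + ij.2 = i + n}
          (fun q => (filtPiece A R (fun t => (F t : Submodule R R)) q.1.1) ⊗[A]
            (filtPiece A R G q.1.2))
          ⟨(i + ij.1.1, ij.1.2), by rw [add_assoc, ij.2]⟩).comp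
        (LinearMap.rTensor (filtPiece A R G ij.1.2)
          (grSmulPiece A R F hFmul i r hr ij.1.1))) ij u

set_option maxHeartbeats 1600000 in
lemma psi_phi (i n : ℕ) (r : R) (hr : r ∈ F i)
    (ψ : filtPiece A R (prodFilt A R F M G) n →ₗ[A]
      filtPiece A R (prodFilt A R F M G) (i + n))
    (hψ : ∀ x : ↥((prodFilt A R F M G n).restrictScalars A),
      ∃ h : r • (x : R ⊗[A] M) ∈ prodFilt A R F M G (i + n),
        ψ (Submodule.Quotient.mk x) = Submodule.Quotient.mk
          (⟨r • (x : R ⊗[A] M), h⟩ : ↥((prodFilt A R F M G (i + n)).restrictScalars A))) :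
    ψ ∘ₗ Phi A R F M G n =
      (Phi A R F M G (i + n)) ∘ₗ grSmulTensor A R F hFmul M G i r hr n := by
  refine DirectSum.linearMap_ext A (fun ij => ?_)
  refine TensorProduct.ext' (fun u v => ?_)
  obtain ⟨x, rfl⟩ := Submodule.Quotient.mk_surjective _ u
  obtain ⟨y, rfl⟩ := Submodule.Quotient.mk_surjective _ v
  rw [LinearMap.comp_apply, LinearMap.comp_apply, LinearMap.comp_apply, LinearMap.comp_apply,
    Phi_lof, phiComp_tmul]
  obtain ⟨hmem, heq⟩ := hψ ⟨x.1 ⊗ₜ[A] y.1, tmul_mem_prodFilt A R F M G ij.2 x.2 y.2⟩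
  rw [heq, grSmulTensor_lof, LinearMap.comp_apply, LinearMap.rTensor_tmul,
    grSmulPiece_mk, Phi_lof, phiComp_tmul]
  exact congrArg _ (Subtype.ext (smul_tmul' r x.1 y.1))

end Act

theorem gr_of_tensor_iso_gr_tensor_gr
    (A R : Type) [CommRing A] [CommRing R] [Algebra A R]
    (F : ℕ → Ideal R)
    -- `R = ∪ R_i`: a decreasing filtration by ideals with `R_0 = R`
    (hF0 : F 0 = ⊤) (hFdec : ∀ i, F (i + 1) ≤ F i)
    (hFmul : ∀ i j, F i * F j ≤ F (i + j))
    -- `A = R_0 / R_1`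
    (hbase : Function.Bijective (algebraMap A (R ⧸ F 1)))
    -- the filtration is flat and has flat graded pieces
    (hflat : ∀ i, Module.Flat A (F i))
    (hflatq : ∀ i, Module.Flat A (filtPiece A R (fun t => (F t : Submodule R R)) i))
    -- a filtered `R`-module `M = ∪ M_i`
    (M : Type) [AddCommGroup M] [Module R M] [Module A M] [IsScalarTower A R M]
    (G : ℕ → Submodule R M)
    (hG0 : G 0 = ⊤) (hGdec : ∀ i, G (i + 1) ≤ G i)
    (hGsmul : ∀ i j (r : R), r ∈ F i → ∀ m ∈ G j, r • m ∈ G (i + j)) :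
    -- there is a family of `A`-linear isomorphisms, one in each degree `n`,
    ∃ e : ∀ n : ℕ, filtPiece A R (prodFilt A R F M G) n ≃ₗ[A] grTensorDeg A R F M G n,
      -- which is `gr(R)`-linear: for every `i`, `r ∈ F i` and `n`, it intertwines the map
      -- `ψ` induced on `gr(R ⊗ M)` by multiplication by `r` (characterized on
      -- representatives) with multiplication by the class of `r` on `gr(R) ⊗ gr(M)`
      ∀ (i n : ℕ) (r : R) (hr : r ∈ F i)
        (ψ : filtPiece A R (prodFilt A R F M G) n →ₗ[A]
          filtPiece A R (prodFilt A R F M G) (i + n)),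
        (∀ x : ↥((prodFilt A R F M G n).restrictScalars A),
          ∃ h : r • (x : R ⊗[A] M) ∈ prodFilt A R F M G (i + n),
            ψ (Submodule.Quotient.mk x) = Submodule.Quotient.mk
              (⟨r • (x : R ⊗[A] M), h⟩ :
                ↥((prodFilt A R F M G (i + n)).restrictScalars A))) →
        (e (i + n)).toLinearMap.comp ψ =
          (grSmulTensor A R F hFmul M G i r hr n).comp (e n).toLinearMap := by
  classical
  refine ⟨fun n => (LinearEquiv.ofBijective (Phi A R F M G n)
    ⟨Phi_injective A R F M G hFdec hGdec hF0 hflatq n, Phi_surjective A R F M G n⟩).symm,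
    ?_⟩
  intro i n r hr ψ hψ
  have hcomp := psi_phi A R F hFmul M G i n r hr ψ hψ
  apply LinearMap.ext
  intro q
  set E := fun m => LinearEquiv.ofBijective (Phi A R F M G m)
    ⟨Phi_injective A R F M G hFdec hGdec hF0 hflatq m, Phi_surjective A R F M G m⟩ with hE
  show (E (i + n)).symm (ψ q) = grSmulTensor A R F hFmul M G i r hr n ((E n).symm q)
  have hq : Phi A R F M G n ((E n).symm q) = q := (E n).apply_symm_apply q
  have h1 : ψ q = Phi A R F M G (i + n)
      (grSmulTensor A R F hFmul M G i r hr n ((E n).symm q)) := by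
    conv_lhs => rw [← hq]
    exact LinearMap.congr_fun hcomp ((E n).symm q)
  rw [h1]
  exact (E (i + n)).symm_apply_apply _
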